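/- If two vertices v,w of a connected graph G are not twins, then dist_G(v,w) equals the distance in the twin graph between their twin classes: dist_G(v,w) = dist_{G*}(v*, w*). -/

import Mathlib

/-- Two distinct vertices are twins if they have the same open neighbourhood
or the same closed neighbourhood. -/
def Twins {V : Type*} (G : SimpleGraph V) (u v : V) : Prop :=
  u ≠ v ∧ ((∀ x, G.Adj u x ↔ G.Adj v x) ∨ (∀ x, (G.Adj u x ∨ u = x) ↔ (G.Adj v x ∨ v = x)))

/-- The equivalence relation "equal or twins". -/
def twinSetoid {V : Type*} (G : SimpleGraph V) : Setoid V :=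
  ⟨fun u v => u = v ∨ Twins G u v, by
    constructor
    · exact fun x => Or.inl rfl
    · rintro x y (rfl | ⟨hne, h⟩)
      · exact Or.inl rfl
      · exact Or.inr ⟨hne.symm, h.imp (fun h x => (h x).symm) (fun h x => (h x).symm)⟩
    · rintro x y z (rfl | hxy) (rfl | hyz)
      · exact Or.inl rfl
      · exact Or.inr hyz
      · exact Or.inr hxy
      · by_cases hxz : x = z
        · exact Or.inl hxz
        · refine Or.inr ⟨hxz, ?_⟩
          obtain ⟨hxy', ho | hc⟩ := hxy <;> obtain ⟨hyz', ho2 | hc2⟩ := hyz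
          · exact Or.inl (fun a => (ho a).trans (ho2 a))
          · exfalso
            have hyzadj : G.Adj y z := by
              rcases (hc2 z).mpr (Or.inr rfl) with h | h
              · exact h
              · exact absurd h hyz'
            have hxy_nadj : ¬ G.Adj x y := fun h => ((ho y).mp h).ne rfl
            have hxz_adj : G.Adj x z := (ho z).mpr hyzadj
            rcases (hc2 x).mpr (Or.inl hxz_adj.symm) with h | h
            · exact hxy_nadj h.symm
            · exact hxy' h.symm
          · exfalso
            have hxyadj : G.Adj x y := by
              rcases (hc y).mpr (Or.inr rfl) with h | h
              · exact h
              · exact absurd h hxy'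
            have hyz_nadj : ¬ G.Adj y z := fun h => ((ho2 z).mp h).ne rfl
            have hzx_adj : G.Adj z x := (ho2 x).mp hxyadj.symm
            rcases (hc z).mp (Or.inl hzx_adj.symm) with h | h
            · exact hyz_nadj h
            · exact hyz' h
          · exact Or.inr (fun a => (hc a).trans (hc2 a))⟩

/-- The twin graph `G*`: the quotient of `G` by the twin relation, two classes
being adjacent iff some (equivalently, every) pair of their members is adjacent. -/
def twinGraph {V : Type*} (G : SimpleGraph V) : SimpleGraph (Quotient (twinSetoid G)) where
  Adj a b := a ≠ b ∧ ∃ u v : V, Quotient.mk (twinSetoid G) u = a ∧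
      Quotient.mk (twinSetoid G) v = b ∧ G.Adj u v
  symm := ⟨by
    rintro a b ⟨hab, u, v, hu, hv, h⟩
    exact ⟨hab.symm, v, u, hv, hu, h.symm⟩⟩
  loopless := ⟨by
    rintro a ⟨h, -⟩
    exact h rfl⟩

/-! Quotienting by twins only merges vertices with the same neighbours outside the pair, so a
walk between distinct classes lifts, edge by edge, to a walk in `G` between any chosen
representatives; conversely every walk in `G` projects to one in `G*`, dropping the edges
inside a class. Hence the two extended distances agree. -/

namespace SimpleGraph

lemma edist_le_edist_of_forall_walk {V W : Type*} {G : SimpleGraph V} {H : SimpleGraph W}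
    {u v : V} {a b : W} (h : ∀ p : H.Walk a b, ∃ q : G.Walk u v, q.length ≤ p.length) :
    G.edist u v ≤ H.edist a b :=
  le_iInf fun p =>
    let ⟨q, hq⟩ := h p
    (edist_le q).trans (by exact_mod_cast hq)

end SimpleGraph

namespace Twins

variable {V : Type*} {G : SimpleGraph V} {x u y : V}

lemma adj_of_adj (ht : Twins G x u) (hxy : G.Adj x y) (huy : u ≠ y) : G.Adj u y := by
  obtain ⟨-, hopen | hclosed⟩ := ht
  · exact (hopen y).mp hxy
  · exact ((hclosed y).mp (Or.inl hxy)).resolve_right huy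

end Twins

namespace twinGraph

variable {V : Type*} {G : SimpleGraph V} {u w x y : V}

lemma adj_of_mk_eq_of_adj (hx : Quotient.mk (twinSetoid G) x = Quotient.mk _ u)
    (hxy : G.Adj x y) (huy : u ≠ y) : G.Adj u y := by
  rcases Quotient.exact hx with rfl | ht
  · exact hxy
  · exact ht.adj_of_adj hxy huy

lemma adj_mk_iff :
    (twinGraph G).Adj (Quotient.mk _ u) (Quotient.mk _ w) ↔
      Quotient.mk (twinSetoid G) u ≠ Quotient.mk _ w ∧ G.Adj u w := by
  refine ⟨fun ⟨hne, x, y, hx, hy, hxy⟩ => ⟨hne, ?_⟩, fun ⟨hne, huw⟩ => ⟨hne, u, w, rfl, rfl, huw⟩⟩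
  have huy : G.Adj u y := adj_of_mk_eq_of_adj hx hxy (by rintro rfl; exact hne hy)
  exact (adj_of_mk_eq_of_adj hy huy.symm fun h => hne (h ▸ rfl)).symm

lemma exists_walk_length_le_of_walk (p : G.Walk u w) :
    ∃ q : (twinGraph G).Walk (Quotient.mk _ u) (Quotient.mk _ w), q.length ≤ p.length := by
  induction p with
  | nil => exact ⟨.nil, le_rfl⟩
  | @cons u x w hux p ih =>
    obtain ⟨q, hq⟩ := ih
    by_cases hsame : Quotient.mk (twinSetoid G) u = Quotient.mk _ x
    · exact ⟨q.copy hsame.symm rfl, by simp only [SimpleGraph.Walk.length_copy,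
        SimpleGraph.Walk.length_cons]; omega⟩
    · exact ⟨.cons (adj_mk_iff.mpr ⟨hsame, hux⟩) q, by simpa using hq⟩

lemma exists_walk_length_le_of_twinGraph_walk {a b : Quotient (twinSetoid G)}
    (p : (twinGraph G).Walk a b) (hab : a ≠ b) (hu : Quotient.mk _ u = a)
    (hw : Quotient.mk _ w = b) : ∃ q : G.Walk u w, q.length ≤ p.length := by
  induction p generalizing u with
  | nil => exact absurd rfl hab
  | @cons a c b hac p ih =>
    subst hu hw
    by_cases hcw : c = Quotient.mk _ w
    · subst hcw
      exact ⟨.cons (adj_mk_iff.mp hac).2 .nil, by simp⟩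
    · have hc : Quotient.mk (twinSetoid G) c.out = c := Quotient.out_eq c
      obtain ⟨q, hq⟩ := ih hcw hc rfl
      rw [← hc] at hac
      exact ⟨.cons (adj_mk_iff.mp hac).2 q, by simpa using hq⟩

lemma edist_mk_of_ne (hne : Quotient.mk (twinSetoid G) u ≠ Quotient.mk _ w) :
    (twinGraph G).edist (Quotient.mk _ u) (Quotient.mk _ w) = G.edist u w :=
  le_antisymm (SimpleGraph.edist_le_edist_of_forall_walk exists_walk_length_le_of_walk)
    (SimpleGraph.edist_le_edist_of_forall_walk fun p =>
      exists_walk_length_le_of_twinGraph_walk p hne rfl rfl)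

end twinGraph

theorem dist_eq_twinGraph_dist_general {V : Type*} (G : SimpleGraph V)
    (v w : V) (h : ¬ Twins G v w) :
    G.dist v w =
      (twinGraph G).dist (Quotient.mk (twinSetoid G) v) (Quotient.mk (twinSetoid G) w) := by
  by_cases hvw : v = w
  · subst hvw
    simp
  have hne : Quotient.mk (twinSetoid G) v ≠ Quotient.mk _ w :=
    fun he => (Quotient.exact he).elim hvw h
  rw [SimpleGraph.dist, SimpleGraph.dist, twinGraph.edist_mk_of_ne hne]

theorem dist_eq_twinGraph_dist {V : Type*} (G : SimpleGraph V) (hG : G.Connected)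
    (v w : V) (h : ¬ Twins G v w) :
    G.dist v w =
      (twinGraph G).dist (Quotient.mk (twinSetoid G) v) (Quotient.mk (twinSetoid G) w) :=
  dist_eq_twinGraph_dist_general G v w h
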